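/- arXiv:2301.08706 — 4 statements merged into one kernel-verified Lean document; each statement's English description precedes it below -/
import Mathlib

section
/- Let E be a finite-dimensional inner product space over 𝕜, where 𝕜 is ℝ or ℂ, and let p be a natural number. Every sequence (V_n)_{n∈ℕ} of subspaces of E with finrank V_n = p for all n admits a strictly increasing function φ : ℕ → ℕ and a subspace V of E with finrank V = p such that ‖P_{V_{φ(n)}} − P_V‖ → 0 as n → ∞. -/
open FiniteDimensional Filter

/-- The orthogonal projection onto a subspace `V` of a finite-dimensional inner product
space, regarded as a continuous linear endomorphism. -/
noncomputable def orthProjection {𝕜 E : Type*} [RCLike 𝕜] [NormedAddCommGroup E]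
    [InnerProductSpace 𝕜 E] [FiniteDimensional 𝕜 E] (V : Submodule 𝕜 E) : E →L[𝕜] E :=
  V.subtypeL.comp (V.orthogonalProjectionOnto)

/-!
Orthogonal projections are exactly the star projections `P = P² = P⋆` of `End(E)`, a closed
condition, and they have norm at most `1`; in the finite-dimensional space `End(E)` they thus
form a compact set. The trace is continuous and equals the rank on idempotents, so the
projections of rank `p` form a closed, hence compact, subset, from which every sequence has a
convergent subsequence.
-/

lemma isClosed_setOf_isStarProjection {R : Type*} [Mul R] [Star R] [TopologicalSpace R]
    [ContinuousMul R] [ContinuousStar R] [T2Space R] :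
    IsClosed {p : R | IsStarProjection p} := by
  simp only [isStarProjection_iff, IsIdempotentElem, IsSelfAdjoint, Set.ofPred_and]
  exact (isClosed_eq (continuous_id.mul continuous_id) continuous_id).inter
    (isClosed_eq continuous_star continuous_id)

lemma LinearMap.trace_eq_finrank_range_of_isIdempotentElem {K V : Type*} [Field K]
    [AddCommGroup V] [Module K V] [FiniteDimensional K V] {e : V →ₗ[K] V}
    (he : IsIdempotentElem e) :
    LinearMap.trace K V e = (Module.finrank K (LinearMap.range e) : K) :=
  (LinearMap.IsIdempotentElem.isProj_range e he).trace

section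

variable {𝕜 E : Type*} [RCLike 𝕜] [NormedAddCommGroup E] [InnerProductSpace 𝕜 E]
  [FiniteDimensional 𝕜 E]

lemma orthProjection_eq_starProjection (W : Submodule 𝕜 E) :
    orthProjection W = W.starProjection :=
  rfl

lemma image_orthProjection_setOf_finrank_eq [CompleteSpace E] (p : ℕ) :
    orthProjection '' {W : Submodule 𝕜 E | Module.finrank 𝕜 W = p} =
      {T : E →L[𝕜] E | IsStarProjection T ∧ LinearMap.trace 𝕜 E T = p} := by
  ext T
  constructor
  · rintro ⟨W, hW, rfl⟩
    rw [orthProjection_eq_starProjection]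
    refine ⟨isStarProjection_starProjection, ?_⟩
    rw [LinearMap.trace_eq_finrank_range_of_isIdempotentElem
        (ContinuousLinearMap.IsIdempotentElem.toLinearMap W.isIdempotentElem_starProjection),
      show LinearMap.range (W.starProjection : E →ₗ[𝕜] E) = W from W.range_starProjection, hW]
  · rintro ⟨hT, htrace⟩
    obtain ⟨_, hT_eq⟩ := isStarProjection_iff_eq_starProjection_range.mp hT
    refine ⟨T.range, ?_, hT_eq.symm⟩
    rw [LinearMap.trace_eq_finrank_range_of_isIdempotentElem
      (ContinuousLinearMap.IsIdempotentElem.toLinearMap hT.isIdempotentElem)] at htrace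
    exact_mod_cast htrace

lemma isCompact_image_orthProjection_setOf_finrank_eq (p : ℕ) :
    IsCompact (orthProjection '' {W : Submodule 𝕜 E | Module.finrank 𝕜 W = p}) := by
  have : CompleteSpace E := FiniteDimensional.complete 𝕜 E
  have : ProperSpace (E →L[𝕜] E) := FiniteDimensional.proper 𝕜 _
  have htrace : Continuous fun T : E →L[𝕜] E => LinearMap.trace 𝕜 E T :=
    ((LinearMap.trace 𝕜 E).comp (ContinuousLinearMap.coeLM 𝕜)).continuous_of_finiteDimensional
  rw [image_orthProjection_setOf_finrank_eq, Set.ofPred_and]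
  refine Metric.isCompact_of_isClosed_isBounded
    (isClosed_setOf_isStarProjection.inter (isClosed_eq htrace continuous_const)) ?_
  refine (Metric.isBounded_closedBall (x := (0 : E →L[𝕜] E)) (r := 1)).subset ?_
  rintro T ⟨hT, -⟩
  simpa using hT.norm_le

end

/-- Every sequence of `p`-dimensional subspaces of a finite-dimensional inner product space
admits a subsequence converging, in the gap metric, to a `p`-dimensional subspace. -/
theorem grassmannian_sequentially_compact {𝕜 E : Type*} [RCLike 𝕜] [NormedAddCommGroup E]
    [InnerProductSpace 𝕜 E] [FiniteDimensional 𝕜 E] (p : ℕ)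
    (V : ℕ → Submodule 𝕜 E) (hV : ∀ n, Module.finrank 𝕜 (V n) = p) :
    ∃ φ : ℕ → ℕ, StrictMono φ ∧ ∃ W : Submodule 𝕜 E, Module.finrank 𝕜 W = p ∧
      Tendsto (fun n => ‖orthProjection (V (φ n)) - orthProjection W‖) atTop (nhds 0) := by
  obtain ⟨_, ⟨W, hW, rfl⟩, φ, hφ, hconv⟩ :=
    (isCompact_image_orthProjection_setOf_finrank_eq p).tendsto_subseq
      fun n => Set.mem_image_of_mem orthProjection (hV n)
  exact ⟨φ, hφ, W, hW, tendsto_iff_norm_sub_tendsto_zero.mp hconv⟩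
end

section
/- Let M be a topological space, let E and F be finite-dimensional inner product spaces over 𝕜 ∈ {ℝ, ℂ}, and let d : M → (F →L[𝕜] E) be a continuous family of linear maps. Suppose (x_n)_{n∈ℕ} is a sequence in M converging to x ∈ M, and V is a subspace of E such that the images range(d(x_n)) converge to V in the gap metric, i.e. ‖P_{range(d(x_n))} − P_V‖ → 0. Then range(d(x)) ≤ V. -/
open FiniteDimensional Filter

/-! A vector `d (xs n) u` of `range (d (xs n))` is fixed by the projection onto that range.
Since these projections converge to `P_V` in operator norm and `d (xs n) u → d x u`, the
fixed-point equation passes to the limit: `P_V (d x u) = d x u`, i.e. `d x u ∈ V`. -/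

open Topology

theorem Filter.Tendsto.clm_apply {α 𝕜 E F : Type*} [NontriviallyNormedField 𝕜]
    [SeminormedAddCommGroup E] [NormedSpace 𝕜 E] [SeminormedAddCommGroup F] [NormedSpace 𝕜 F]
    {l : Filter α} {f : α → E →L[𝕜] F} {g : α → E} {A : E →L[𝕜] F} {v : E}
    (hf : Tendsto f l (𝓝 A)) (hg : Tendsto g l (𝓝 v)) :
    Tendsto (fun i => f i (g i)) l (𝓝 (A v)) :=
  ((continuous_fst.clm_apply continuous_snd).tendsto (A, v)).comp (hf.prodMk_nhds hg)

section orthProjection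

variable {𝕜 E : Type*} [RCLike 𝕜] [NormedAddCommGroup E] [InnerProductSpace 𝕜 E]
  [FiniteDimensional 𝕜 E]

theorem orthProjection_eq_self_iff (V : Submodule 𝕜 E) {v : E} :
    orthProjection V v = v ↔ v ∈ V :=
  V.starProjection_eq_self_iff

theorem mem_of_tendsto_orthProjection {ι : Type*} {l : Filter ι} [l.NeBot]
    {V : ι → Submodule 𝕜 E} {W : Submodule 𝕜 E} {v : ι → E} {w : E}
    (hV : Tendsto (fun i => orthProjection (V i)) l (𝓝 (orthProjection W)))
    (hv : Tendsto v l (𝓝 w)) (hmem : ∀ i, v i ∈ V i) : w ∈ W := by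
  have hfix : (fun i => orthProjection (V i) (v i)) = v :=
    funext fun i => (orthProjection_eq_self_iff (V i)).2 (hmem i)
  refine (orthProjection_eq_self_iff W).1 (tendsto_nhds_unique (hV.clm_apply hv) ?_)
  rwa [hfix]

end orthProjection

theorem range_le_of_gap_limit_general {𝕜 E F M : Type*} [RCLike 𝕜]
    [NormedAddCommGroup E] [InnerProductSpace 𝕜 E] [FiniteDimensional 𝕜 E]
    [NormedAddCommGroup F] [InnerProductSpace 𝕜 F]
    [TopologicalSpace M]
    (d : M → (F →L[𝕜] E)) (hd : Continuous d)
    (x : M) (xs : ℕ → M) (hxs : Tendsto xs atTop (nhds x))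
    (V : Submodule 𝕜 E)
    (hconv : Tendsto
      (fun n => ‖orthProjection (LinearMap.range (d (xs n) : F →ₗ[𝕜] E)) - orthProjection V‖)
      atTop (nhds 0)) :
    LinearMap.range (d x : F →ₗ[𝕜] E) ≤ V := by
  rintro _ ⟨u, rfl⟩
  have hd_xs : Tendsto (fun n => d (xs n)) atTop (𝓝 (d x)) := (hd.tendsto x).comp hxs
  exact mem_of_tendsto_orthProjection (tendsto_iff_norm_sub_tendsto_zero.2 hconv)
    (hd_xs.clm_apply tendsto_const_nhds) fun n => LinearMap.mem_range_self _ u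

/-- If the images `range (d (x n))` of a continuous family of linear maps converge in the
gap metric to `V` along a sequence `x n → x`, then `range (d x) ≤ V`. -/
theorem range_le_of_gap_limit {𝕜 E F M : Type*} [RCLike 𝕜]
    [NormedAddCommGroup E] [InnerProductSpace 𝕜 E] [FiniteDimensional 𝕜 E]
    [NormedAddCommGroup F] [InnerProductSpace 𝕜 F] [FiniteDimensional 𝕜 F]
    [TopologicalSpace M]
    (d : M → (F →L[𝕜] E)) (hd : Continuous d)
    (x : M) (xs : ℕ → M) (hxs : Tendsto xs atTop (nhds x))
    (V : Submodule 𝕜 E)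
    (hconv : Tendsto
      (fun n => ‖orthProjection (LinearMap.range (d (xs n) : F →ₗ[𝕜] E)) - orthProjection V‖)
      atTop (nhds 0)) :
    LinearMap.range (d x : F →ₗ[𝕜] E) ≤ V :=
  range_le_of_gap_limit_general d hd x xs hxs V hconv
end

section
/- Let 𝕜 be a field and let T, E_1, E_2, E_3, E_1', E_2', E_3' be finite-dimensional 𝕜-vector spaces. Let d_3 : E_3 → E_2, d_2 : E_2 → E_1, ρ : E_1 → T be linear maps with range d_3 ≤ ker d_2 and range d_2 ≤ ker ρ, and similarly d_3', d_2', ρ' for the primed spaces. Assume: (i) finrank(ker d_2) + finrank(range d_3') = finrank(ker d_2') + finrank(range d_3) (equal degree −2 cohomologies); (ii) finrank(ker ρ) + finrank(range d_2') = finrank(ker ρ') + finrank(range d_2) (equal degree −1 cohomologies); (iii) finrank(range ρ) = finrank(range ρ'). Let r be a natural number and let V ≤ E_2, V' ≤ E_2' be subspaces with range d_3 ≤ V ≤ ker d_2, range d_3' ≤ V' ≤ ker d_2', finrank V + finrank E_1 = finrank E_2 + r, and finrank V' + finrank E_1' = finrank E_2' + r. Then finrank V + finrank(range d_3') = finrank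 V' + finrank(range d_3). -/
open Module

/-- For two resolutions `E₃ → E₂ → E₁ → T` and `E₃' → E₂' → E₁' → T` with equal degree
`-2` and `-1` cohomology dimensions and equal ranks of the anchors, subspaces
`range d₃ ≤ V ≤ ker d₂` and `range d₃' ≤ V' ≤ ker d₂'` of the prescribed dimensions have
images of the same dimension in the respective degree `-2` cohomology quotients. -/
theorem dim_image_in_cohomology_eq_two {𝕜 T E₁ E₂ E₃ E₁' E₂' E₃' : Type*} [Field 𝕜]
    [AddCommGroup T] [Module 𝕜 T] [FiniteDimensional 𝕜 T]
    [AddCommGroup E₁] [Module 𝕜 E₁] [FiniteDimensional 𝕜 E₁]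
    [AddCommGroup E₂] [Module 𝕜 E₂] [FiniteDimensional 𝕜 E₂]
    [AddCommGroup E₃] [Module 𝕜 E₃] [FiniteDimensional 𝕜 E₃]
    [AddCommGroup E₁'] [Module 𝕜 E₁'] [FiniteDimensional 𝕜 E₁']
    [AddCommGroup E₂'] [Module 𝕜 E₂'] [FiniteDimensional 𝕜 E₂']
    [AddCommGroup E₃'] [Module 𝕜 E₃'] [FiniteDimensional 𝕜 E₃']
    (d₃ : E₃ →ₗ[𝕜] E₂) (d₂ : E₂ →ₗ[𝕜] E₁) (ρ : E₁ →ₗ[𝕜] T)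
    (d₃' : E₃' →ₗ[𝕜] E₂') (d₂' : E₂' →ₗ[𝕜] E₁') (ρ' : E₁' →ₗ[𝕜] T)
    (h₃₂ : LinearMap.range d₃ ≤ LinearMap.ker d₂)
    (h₂₁ : LinearMap.range d₂ ≤ LinearMap.ker ρ)
    (h₃₂' : LinearMap.range d₃' ≤ LinearMap.ker d₂')
    (h₂₁' : LinearMap.range d₂' ≤ LinearMap.ker ρ')
    (hcoh₂ : finrank 𝕜 (LinearMap.ker d₂) + finrank 𝕜 (LinearMap.range d₃')
           = finrank 𝕜 (LinearMap.ker d₂') + finrank 𝕜 (LinearMap.range d₃))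
    (hcoh₁ : finrank 𝕜 (LinearMap.ker ρ) + finrank 𝕜 (LinearMap.range d₂')
           = finrank 𝕜 (LinearMap.ker ρ') + finrank 𝕜 (LinearMap.range d₂))
    (hrk : finrank 𝕜 (LinearMap.range ρ) = finrank 𝕜 (LinearMap.range ρ'))
    (r : ℕ) (V : Submodule 𝕜 E₂) (V' : Submodule 𝕜 E₂')
    (hV₁ : LinearMap.range d₃ ≤ V) (hV₂ : V ≤ LinearMap.ker d₂)
    (hV₁' : LinearMap.range d₃' ≤ V') (hV₂' : V' ≤ LinearMap.ker d₂')
    (hdimV : finrank 𝕜 V + finrank 𝕜 E₁ = finrank 𝕜 E₂ + r)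
    (hdimV' : finrank 𝕜 V' + finrank 𝕜 E₁' = finrank 𝕜 E₂' + r) :
    finrank 𝕜 V + finrank 𝕜 (LinearMap.range d₃')
      = finrank 𝕜 V' + finrank 𝕜 (LinearMap.range d₃) := by
  have r2 := LinearMap.finrank_range_add_finrank_ker d₂
  have r2' := LinearMap.finrank_range_add_finrank_ker d₂'
  have rρ := LinearMap.finrank_range_add_finrank_ker ρ
  have rρ' := LinearMap.finrank_range_add_finrank_ker ρ'
  omega
end

section
/- Let 𝕜 be a field and d ≥ 1 a natural number. In the polynomial ring 𝕜[x_1, …, x_d] (i.e. MvPolynomial (Fin d) 𝕜), let I be the ideal generated by the variables x_1, …, x_d and let J be the ideal generated by their squares x_1², …, x_d². Then I^{d−1} · J = I^{d+1}. -/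
open MvPolynomial

lemma prod_mem_pow_card {R : Type*} [CommRing R] (I : Ideal R) {ι : Type*}
    [DecidableEq ι] (t : Finset ι) (f : ι → R) (h : ∀ i ∈ t, f i ∈ I) :
    ∏ i ∈ t, f i ∈ I ^ t.card := by
  induction t using Finset.induction with
  | empty => simp
  | @insert a t ha ih =>
    rw [Finset.prod_insert ha, Finset.card_insert_of_notMem ha, pow_succ, mul_comm]
    exact Ideal.mul_mem_mul (h a (Finset.mem_insert_self a t))
      (ih fun i hi => h i (Finset.mem_insert_of_mem hi))

/-- In `𝕜[x₁, …, x_d]`, writing `I = ⟨x₁, …, x_d⟩` and `J = ⟨x₁², …, x_d²⟩`,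
one has `I^(d-1) * J = I^(d+1)`. -/
theorem pow_span_vars_mul_span_sq {𝕜 : Type*} [Field 𝕜] (d : ℕ) (hd : 1 ≤ d) :
    (Ideal.span (Set.range fun i : Fin d => (X i : MvPolynomial (Fin d) 𝕜))) ^ (d - 1)
        * Ideal.span (Set.range fun i : Fin d => (X i : MvPolynomial (Fin d) 𝕜) ^ 2)
      = (Ideal.span (Set.range fun i : Fin d => (X i : MvPolynomial (Fin d) 𝕜))) ^ (d + 1) := by
  set I : Ideal (MvPolynomial (Fin d) 𝕜) :=
    Ideal.span (Set.range fun i : Fin d => (X i : MvPolynomial (Fin d) 𝕜)) with hI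
  set J : Ideal (MvPolynomial (Fin d) 𝕜) :=
    Ideal.span (Set.range fun i : Fin d => (X i : MvPolynomial (Fin d) 𝕜) ^ 2) with hJ
  apply le_antisymm
  · -- I^(d-1) * J ≤ I^(d+1)
    have hJI : J ≤ I ^ 2 := by
      rw [hJ, Ideal.span_le]
      rintro _ ⟨i, rfl⟩
      exact Ideal.pow_mem_pow (Ideal.subset_span (Set.mem_range_self i)) 2
    calc I ^ (d - 1) * J ≤ I ^ (d - 1) * I ^ 2 := Ideal.mul_mono_right hJI
      _ = I ^ (d + 1) := by rw [← pow_add]; congr 1; omega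
  · -- I^(d+1) ≤ I^(d-1) * J
    rw [hI, Ideal.span, Submodule.span_pow, Submodule.span_le]
    rintro a ha
    rw [Set.mem_pow] at ha
    obtain ⟨f, rfl⟩ := ha
    -- choose indices
    have hg : ∀ i : Fin (d + 1), ∃ g : Fin d, X g = (f i : MvPolynomial (Fin d) 𝕜) :=
      fun i => (f i).2
    choose g hgf using hg
    have hcard : Fintype.card (Fin d) < Fintype.card (Fin (d + 1)) := by simp
    obtain ⟨j, k, hjk, hgjk⟩ := Fintype.exists_ne_map_eq_of_card_lt g hcard
    have hprod : (List.ofFn fun i => (f i : MvPolynomial (Fin d) 𝕜)).prod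
        = ∏ i : Fin (d + 1), (X (g i) : MvPolynomial (Fin d) 𝕜) := by
      rw [List.prod_ofFn]
      exact Finset.prod_congr rfl fun i _ => (hgf i).symm
    rw [SetLike.mem_coe, hprod]
    have hk : k ∈ Finset.univ.erase j := Finset.mem_erase.2 ⟨(Ne.symm hjk), Finset.mem_univ k⟩
    rw [← Finset.prod_erase_mul Finset.univ _ (Finset.mem_univ j),
        ← Finset.prod_erase_mul (Finset.univ.erase j) _ hk, mul_assoc]
    have hrest : ∏ i ∈ (Finset.univ.erase j).erase k, (X (g i) : MvPolynomial (Fin d) 𝕜)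
        ∈ I ^ (d - 1) := by
      have hc : ((Finset.univ.erase j).erase k).card = d - 1 := by
        rw [Finset.card_erase_of_mem hk, Finset.card_erase_of_mem (Finset.mem_univ j)]
        simp
      rw [← hc]
      exact prod_mem_pow_card I _ _ fun i _ => Ideal.subset_span ⟨g i, rfl⟩
    have hsq : (X (g k) : MvPolynomial (Fin d) 𝕜) * X (g j) ∈ J := by
      rw [hgjk, ← sq]
      exact Ideal.subset_span ⟨g k, rfl⟩
    exact Ideal.mul_mem_mul hrest hsq
end
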